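/- Let V be a finite type and E a DAG on V. Let X, Y be distinct vertices and Z ⊆ V \ {X, Y} a set such that Z satisfies the adjustment criterion relative to ({X}, {Y}) and X is not an ancestor of any vertex of Z. Then Z is elementwise minimal for the adjustment criterion relative to ({X}, {Y}) (i.e. for every Z ∈ Z, the set Z \ {Z} does not satisfy the adjustment criterion relative to ({X}, {Y})) if and only if Z is minimal for the adjustment criterion relative to ({X}, {Y}) (i.e. no proper subset of Z satisfies the adjustment criterion relative to ({X}, {Y})). -/

import Mathlib

open scoped Classical

variable {V : Type*}

/-- `a` is an ancestor of `b` (every vertex is its own ancestor). -/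
def Anc (E : V → V → Prop) (a b : V) : Prop := Relation.ReflTransGen E a b

/-- A path in a directed graph `E` from `a` to `b`: a sequence of distinct vertices
`a = vtx 0, …, vtx len = b` (`len ≥ 1`) in which consecutive vertices are joined
by an edge of `E` in either direction. -/
structure GPath (E : V → V → Prop) (a b : V) where
  len : ℕ
  len_pos : 0 < len
  vtx : ℕ → V
  first : vtx 0 = a
  last : vtx len = b
  inj : ∀ i j, i ≤ len → j ≤ len → vtx i = vtx j → i = j
  adj : ∀ i, i < len → E (vtx i) (vtx (i + 1)) ∨ E (vtx (i + 1)) (vtx i)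

namespace GPath

variable {E : V → V → Prop} {a b : V}

/-- The interior vertex at position `i` is a collider on the path. -/
def IsColliderAt (p : GPath E a b) (i : ℕ) : Prop :=
  0 < i ∧ i < p.len ∧ E (p.vtx (i - 1)) (p.vtx i) ∧ E (p.vtx (i + 1)) (p.vtx i)

/-- A path is open given `S` if no non-collider on it lies in `S` and every collider
on it has a descendant in `S`. -/
def OpenGiven (p : GPath E a b) (S : Set V) : Prop :=
  (∀ i, 0 < i → i < p.len → ¬ p.IsColliderAt i → p.vtx i ∉ S) ∧
  (∀ i, p.IsColliderAt i → ∃ d ∈ S, Anc E (p.vtx i) d)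

/-- A back-door path: the first edge points into the first vertex. -/
def IsBackdoor (p : GPath E a b) : Prop := E (p.vtx 1) (p.vtx 0)

/-- A causal (directed) path. -/
def Causal (p : GPath E a b) : Prop := ∀ i, i < p.len → E (p.vtx i) (p.vtx (i + 1))

/-- A path is proper with respect to `X` if only its first vertex lies in `X`. -/
def ProperFrom (p : GPath E a b) (X : Set V) : Prop :=
  ∀ i, 0 < i → i ≤ p.len → p.vtx i ∉ X

/-- The vertex `w` lies on the path. -/
def MemV (p : GPath E a b) (w : V) : Prop := ∃ i ≤ p.len, p.vtx i = w

/-- The number of colliders on the path. -/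
noncomputable def numColliders (p : GPath E a b) : ℕ := Set.ncard {i | p.IsColliderAt i}

end GPath

/-- `A` and `B` are d-separated given `S`: every path from `A` to `B` is blocked given `S`. -/
def DSep (E : V → V → Prop) (A B S : Set V) : Prop :=
  ∀ a ∈ A, ∀ b ∈ B, ∀ p : GPath E a b, ¬ p.OpenGiven S

/-- `A` and `B` are d-connected given `S`: some path from `A` to `B` is open given `S`. -/
def DConn (E : V → V → Prop) (A B S : Set V) : Prop :=
  ∃ a ∈ A, ∃ b ∈ B, ∃ p : GPath E a b, p.OpenGiven S

/-- The set of descendants of a vertex set `S`. -/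
def descendants (E : V → V → Prop) (S : Set V) : Set V := {d | ∃ s ∈ S, Anc E s d}

/-- `S` blocks every back-door path from `x` to `y`. -/
def BlocksBackdoor (E : V → V → Prop) (x y : V) (S : Set V) : Prop :=
  ∀ p : GPath E x y, p.IsBackdoor → ¬ p.OpenGiven S

/-- The back-door criterion for `Z` relative to `(X, Y)`. -/
def BackdoorCriterion (E : V → V → Prop) (X Y Z : Set V) : Prop :=
  Z ∩ descendants E X = ∅ ∧
  ∀ x ∈ X, ∀ y ∈ Y, BlocksBackdoor E x y (Z ∪ (X \ {x}))

/-- The adjustment criterion for `Z` relative to `(X, Y)`: (a) `Z` contains no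
descendant of any `w ∉ X` lying on a proper causal path from `X` to `Y`, and
(b) `Z` blocks every proper non-causal path from `X` to `Y`. -/
def AdjustmentCriterion (E : V → V → Prop) (X Y Z : Set V) : Prop :=
  (∀ w, w ∉ X →
      (∃ x ∈ X, ∃ y ∈ Y, ∃ p : GPath E x y, p.ProperFrom X ∧ p.Causal ∧ p.MemV w) →
      ∀ z ∈ Z, ¬ Anc E w z) ∧
  (∀ x ∈ X, ∀ y ∈ Y, ∀ p : GPath E x y, p.ProperFrom X → ¬ p.Causal → ¬ p.OpenGiven Z)


/-!
Minimality trivially implies elementwise minimality. Conversely, let `Z` be elementwise minimal,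
let `Z' ⊊ Z` satisfy the criterion and pick `z ∈ Z \ Z'`. Condition (a) passes to subsets, so
`Z \ {z}` violates (b): some non-causal path `p` from `X` to `Y` is open given `Z \ {z}`. It
starts with an edge into `X`, since otherwise its first collider would be a descendant of `X`
with a descendant in `Z`.

Each vertex of `Z` is an ancestor of `X` or `Y`: it is a non-collider on such a path, and
following the path away from it along its edges reaches an endpoint or a collider with a
descendant in `Z` (induct along the descendant order). So, as a walk, `p` has its non-colliders
outside `Z'` and its colliders among the ancestors of `Z' ∪ {X, Y}`. A collider `c` with no
descendant in `Z'` is an ancestor of `X` or `Y`; replacing the part of the walk before `c` by a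
reversed directed path from `c` to `X`, or the part after `c` by a directed path from `c` to `Y`,
removes the collider `c` and creates none, and the new vertices are descendants of `c`, so they
avoid `Z'`. Cutting out the loops of the resulting walk gives a back-door path from `X` to `Y`
that is open given `Z'`, contradicting (b) for `Z'`.
-/

open Relation

section Chains

variable {E : V → V → Prop} {f : ℕ → V} {i j : ℕ}

theorem transGen_of_chain (hij : i < j) (h : ∀ k, i ≤ k → k < j → E (f k) (f (k + 1))) :
    TransGen E (f i) (f j) := by
  induction j, hij using Nat.le_induction with
  | base => exact .single (h i le_rfl (Nat.lt_succ_self i))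
  | succ j hj ih => exact (ih fun k hk hk' => h k hk (by omega)).tail (h j (by omega) (by omega))

theorem anc_of_chain (hij : i ≤ j) (h : ∀ k, i ≤ k → k < j → E (f k) (f (k + 1))) :
    Anc E (f i) (f j) := by
  rcases hij.eq_or_lt with rfl | hij
  · exact .refl
  · exact (transGen_of_chain hij h).to_reflTransGen

theorem not_rel_of_rel [Std.Irrefl (TransGen E)] {a b : V} (h : E a b) : ¬ E b a :=
  fun h' => irrefl a ((TransGen.single h).tail h')

end Chains

/-- Like `GPath`, but vertices may repeat and the length may be zero. -/
structure GWalk (E : V → V → Prop) (a b : V) where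
  len : ℕ
  vtx : ℕ → V
  first : vtx 0 = a
  last : vtx len = b
  adj : ∀ i, i < len → E (vtx i) (vtx (i + 1)) ∨ E (vtx (i + 1)) (vtx i)

def GPath.toWalk {E : V → V → Prop} {a b : V} (p : GPath E a b) : GWalk E a b :=
  ⟨p.len, p.vtx, p.first, p.last, p.adj⟩

namespace GWalk

variable {E : V → V → Prop} {a b c v : V}

def IsColliderAt (w : GWalk E a b) (i : ℕ) : Prop :=
  0 < i ∧ i < w.len ∧ E (w.vtx (i - 1)) (w.vtx i) ∧ E (w.vtx (i + 1)) (w.vtx i)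

/-- `w.ActiveGiven S S` is `GPath.OpenGiven S` for walks. -/
def ActiveGiven (w : GWalk E a b) (S A : Set V) : Prop :=
  (∀ i, 0 < i → i < w.len → ¬ w.IsColliderAt i → w.vtx i ∉ S) ∧
  (∀ i, w.IsColliderAt i → ∃ d ∈ A, Anc E (w.vtx i) d)

/-- Never returning to `a` is what lets the first edge survive the removal of loops. -/
def IsBackdoor (w : GWalk E a b) : Prop :=
  0 < w.len ∧ E (w.vtx 1) (w.vtx 0) ∧ ∀ i, 0 < i → i ≤ w.len → w.vtx i ≠ a

def IsDirected (w : GWalk E a b) : Prop := ∀ i, i < w.len → E (w.vtx i) (w.vtx (i + 1))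

noncomputable def numColliders (w : GWalk E a b) : ℕ := Set.ncard {i | w.IsColliderAt i}

def nil (a : V) : GWalk E a a :=
  ⟨0, fun _ => a, rfl, rfl, fun _ h => absurd h (Nat.not_lt_zero _)⟩

def single (h : E a b) : GWalk E a b :=
  ⟨1, fun i => if i = 0 then a else b, rfl, rfl, fun i hi => by simp [show i = 0 by omega, h]⟩

def append (w₁ : GWalk E a b) (w₂ : GWalk E b c) : GWalk E a c where
  len := w₁.len + w₂.len
  vtx k := if k ≤ w₁.len then w₁.vtx k else w₂.vtx (k - w₁.len)
  first := by simp [w₁.first]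
  last := by
    split_ifs with h
    · have h0 : w₂.len = 0 := by omega
      rw [h0, Nat.add_zero, w₁.last, ← w₂.first, ← h0, w₂.last]
    · simp [w₂.last]
  adj k hk := by
    by_cases h : k < w₁.len
    · simpa [h.le, Nat.succ_le_of_lt h] using w₁.adj k h
    · have := w₂.adj (k - w₁.len) (by omega)
      rcases (Nat.le_of_not_lt h).eq_or_lt with h' | h'
      · subst h'
        simpa [w₁.last, ← w₂.first] using this
      · simpa [show ¬ k ≤ w₁.len by omega, show ¬ k + 1 ≤ w₁.len by omega,
          show k + 1 - w₁.len = k - w₁.len + 1 by omega] using this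

def take (w : GWalk E a b) (i : ℕ) (hi : i ≤ w.len) (hv : w.vtx i = v) : GWalk E a v :=
  ⟨i, w.vtx, w.first, hv, fun k hk => w.adj k (by omega)⟩

def drop (w : GWalk E a b) (i : ℕ) (hi : i ≤ w.len) (hv : w.vtx i = v) : GWalk E v b :=
  ⟨w.len - i, fun k => w.vtx (i + k), by simpa using hv, by rw [Nat.add_sub_cancel' hi, w.last],
    fun k hk => by simpa [Nat.add_assoc] using w.adj (i + k) (by omega)⟩

def reverse (w : GWalk E a b) : GWalk E b a where
  len := w.len
  vtx k := w.vtx (w.len - k)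
  first := by simp [w.last]
  last := by simp [w.first]
  adj k hk := by
    have := w.adj (w.len - (k + 1)) (by omega)
    rw [show w.len - (k + 1) + 1 = w.len - k by omega] at this
    exact this.symm

def toPath (w : GWalk E a b) (hpos : 0 < w.len)
    (hinj : ∀ i j, i ≤ w.len → j ≤ w.len → w.vtx i = w.vtx j → i = j) : GPath E a b :=
  ⟨w.len, hpos, w.vtx, w.first, w.last, hinj, w.adj⟩

section Operations

variable (w : GWalk E a b) (w₁ : GWalk E a b) (w₂ : GWalk E b c)

@[simp] theorem append_len : (w₁.append w₂).len = w₁.len + w₂.len := rfl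

theorem append_vtx_of_le {k : ℕ} (hk : k ≤ w₁.len) : (w₁.append w₂).vtx k = w₁.vtx k :=
  if_pos hk

theorem append_vtx_add (k : ℕ) : (w₁.append w₂).vtx (w₁.len + k) = w₂.vtx k := by
  rcases Nat.eq_zero_or_pos k with rfl | hk
  · rw [Nat.add_zero, append_vtx_of_le _ _ le_rfl, w₁.last, w₂.first]
  · exact (if_neg (by omega)).trans (by rw [Nat.add_sub_cancel_left])

@[simp] theorem reverse_len : w.reverse.len = w.len := rfl

@[simp] theorem reverse_vtx (k : ℕ) : w.reverse.vtx k = w.vtx (w.len - k) := rfl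

@[simp] theorem take_len {i : ℕ} (hi : i ≤ w.len) (hv : w.vtx i = v) : (w.take i hi hv).len = i :=
  rfl

@[simp] theorem drop_len {i : ℕ} (hi : i ≤ w.len) (hv : w.vtx i = v) :
    (w.drop i hi hv).len = w.len - i :=
  rfl

@[simp] theorem drop_vtx {i : ℕ} (hi : i ≤ w.len) (hv : w.vtx i = v) (k : ℕ) :
    (w.drop i hi hv).vtx k = w.vtx (i + k) :=
  rfl

theorem take_append_vtx_of_le {i k : ℕ} (hi : i ≤ w.len) (hv : w.vtx i = v) (u : GWalk E v c)
    (hk : k ≤ i) : ((w.take i hi hv).append u).vtx k = w.vtx k :=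
  append_vtx_of_le _ _ hk

theorem take_append_vtx_add {i : ℕ} (hi : i ≤ w.len) (hv : w.vtx i = v) (u : GWalk E v c)
    (k : ℕ) : ((w.take i hi hv).append u).vtx (i + k) = u.vtx k :=
  append_vtx_add _ _ k

theorem reverse_append_vtx_of_le (u : GWalk E a c) {k : ℕ} (hk : k ≤ w.len) :
    (w.reverse.append u).vtx k = w.vtx (w.len - k) :=
  append_vtx_of_le _ _ hk

theorem reverse_append_vtx_add (u : GWalk E a c) (k : ℕ) :
    (w.reverse.append u).vtx (w.len + k) = u.vtx k :=
  append_vtx_add _ _ k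

theorem isColliderAt_append_of_lt {k : ℕ} (hk : k < w₁.len) :
    (w₁.append w₂).IsColliderAt k ↔ w₁.IsColliderAt k := by
  simp only [IsColliderAt, append_len, append_vtx_of_le w₁ w₂ hk.le,
    append_vtx_of_le w₁ w₂ (show k - 1 ≤ w₁.len by omega),
    append_vtx_of_le w₁ w₂ (show k + 1 ≤ w₁.len by omega)]
  constructor
  · rintro ⟨h0, -, h⟩; exact ⟨h0, hk, h⟩
  · rintro ⟨h0, -, h⟩; exact ⟨h0, by omega, h⟩

theorem isColliderAt_append_add {k : ℕ} (hk : 0 < k) :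
    (w₁.append w₂).IsColliderAt (w₁.len + k) ↔ w₂.IsColliderAt k := by
  have hprev : w₁.len + k - 1 = w₁.len + (k - 1) := by omega
  simp only [IsColliderAt, hprev, Nat.add_assoc, append_vtx_add, append_len]
  constructor
  · rintro ⟨-, h1, h⟩; exact ⟨hk, by omega, h⟩
  · rintro ⟨-, h1, h⟩; exact ⟨by omega, by omega, h⟩

theorem isColliderAt_take {i k : ℕ} (hi : i ≤ w.len) (hv : w.vtx i = v) (hk : k < i) :
    (w.take i hi hv).IsColliderAt k ↔ w.IsColliderAt k := by
  simp only [IsColliderAt, take]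
  constructor
  · rintro ⟨h0, -, h⟩; exact ⟨h0, by omega, h⟩
  · rintro ⟨h0, -, h⟩; exact ⟨h0, hk, h⟩

theorem isColliderAt_drop {i k : ℕ} (hi : i ≤ w.len) (hv : w.vtx i = v) (hk : 0 < k) :
    (w.drop i hi hv).IsColliderAt k ↔ w.IsColliderAt (i + k) := by
  have hprev : i + (k - 1) = i + k - 1 := by omega
  simp only [IsColliderAt, drop, hprev, Nat.add_assoc]
  constructor
  · rintro ⟨-, h1, h⟩; exact ⟨by omega, by omega, h⟩
  · rintro ⟨-, h1, h⟩; exact ⟨hk, by omega, h⟩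

theorem isColliderAt_reverse (k : ℕ) : w.reverse.IsColliderAt k ↔ w.IsColliderAt (w.len - k) := by
  simp only [IsColliderAt, reverse_len, reverse_vtx]
  constructor
  · rintro ⟨h0, h1, h2, h3⟩
    rw [show w.len - (k - 1) = w.len - k + 1 by omega] at h2
    rw [show w.len - (k + 1) = w.len - k - 1 by omega] at h3
    exact ⟨by omega, by omega, h3, h2⟩
  · rintro ⟨h0, h1, h2, h3⟩
    refine ⟨by omega, by omega, ?_, ?_⟩
    · rwa [show w.len - (k - 1) = w.len - k + 1 by omega]
    · rwa [show w.len - (k + 1) = w.len - k - 1 by omega]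

end Operations

theorem ActiveGiven.mono {w : GWalk E a b} {S S' A A' : Set V} (h : w.ActiveGiven S A)
    (hS : S' ⊆ S) (hA : ∀ d ∈ A, ∃ d' ∈ A', Anc E d d') : w.ActiveGiven S' A' := by
  refine ⟨fun i hi0 hi hnc hS' => h.1 i hi0 hi hnc (hS hS'), fun i hi => ?_⟩
  obtain ⟨d, hd, hanc⟩ := h.2 i hi
  obtain ⟨d', hd', hanc'⟩ := hA d hd
  exact ⟨d', hd', hanc.trans hanc'⟩

theorem exists_collider_or_forall_forward (w : GWalk E a b) {i : ℕ} (hi : i < w.len)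
    (he : E (w.vtx i) (w.vtx (i + 1))) :
    (∃ l, w.IsColliderAt l ∧ Anc E (w.vtx i) (w.vtx l)) ∨
      ∀ k, i ≤ k → k < w.len → E (w.vtx k) (w.vtx (k + 1)) := by
  induction h : w.len - (i + 1) generalizing i with
  | zero =>
    right
    intro k hk hk'
    obtain rfl : k = i := by omega
    exact he
  | succ n ih =>
    rcases w.adj (i + 1) (by omega) with hf | hb
    · rcases ih (by omega) hf (by omega) with ⟨l, hl, hanc⟩ | hall
      · exact .inl ⟨l, hl, .head he hanc⟩
      · right
        intro k hk hk'
        rcases hk.eq_or_lt with rfl | hk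
        · exact he
        · exact hall k hk hk'
    · exact .inl ⟨i + 1, ⟨by omega, by omega, by simpa using he, hb⟩, .single he⟩

theorem anc_ends_or_collider_of_not_isColliderAt (w : GWalk E a b) {i : ℕ} (hi : i ≤ w.len)
    (hnc : ¬ w.IsColliderAt i) :
    Anc E (w.vtx i) a ∨ Anc E (w.vtx i) b ∨ ∃ l, w.IsColliderAt l ∧ Anc E (w.vtx i) (w.vtx l) := by
  by_cases hf : i < w.len ∧ E (w.vtx i) (w.vtx (i + 1))
  · rcases w.exists_collider_or_forall_forward hf.1 hf.2 with h | h
    · exact .inr (.inr h)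
    · have := anc_of_chain hi h
      rw [w.last] at this
      exact .inr (.inl this)
  by_cases hb : 0 < i ∧ E (w.vtx i) (w.vtx (i - 1))
  · have hrev : E (w.reverse.vtx (w.len - i)) (w.reverse.vtx (w.len - i + 1)) := by
      simpa [Nat.sub_sub_self hi, show w.len - (w.len - i + 1) = i - 1 by omega] using hb.2
    rcases w.reverse.exists_collider_or_forall_forward (by simp; omega) hrev with ⟨l, hl, hanc⟩ | h
    · refine .inr (.inr ⟨w.len - l, (w.isColliderAt_reverse l).1 hl, ?_⟩)
      simpa [Nat.sub_sub_self hi] using hanc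
    · have := anc_of_chain (Nat.sub_le w.len i) h
      simp only [reverse_vtx, Nat.sub_sub_self hi, Nat.sub_self, w.first] at this
      exact .inl this
  rcases Nat.eq_zero_or_pos i with rfl | hi0
  · exact .inl (by rw [w.first]; exact .refl)
  rcases hi.eq_or_lt with rfl | hilen
  · exact .inr (.inl (by rw [w.last]; exact .refl))
  refine absurd ⟨hi0, hilen, ?_, ?_⟩ hnc
  · have := w.adj (i - 1) (by omega)
    rw [Nat.sub_add_cancel hi0] at this
    exact this.resolve_right fun h => hb ⟨hi0, h⟩
  · exact (w.adj i hilen).resolve_left fun h => hf ⟨hilen, h⟩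

theorem exists_isDirected_of_anc (h : Anc E a b) : ∃ u : GWalk E a b, u.IsDirected := by
  induction h with
  | refl => exact ⟨nil a, fun _ h => absurd h (Nat.not_lt_zero _)⟩
  | tail _ hbc ih =>
    obtain ⟨u, hu⟩ := ih
    refine ⟨u.append (single hbc), fun k hk => ?_⟩
    rcases lt_or_ge k u.len with h | h
    · rw [append_vtx_of_le _ _ h.le, append_vtx_of_le _ _ h]
      exact hu k h
    · obtain rfl : k = u.len := by simp [single] at hk; omega
      rw [append_vtx_of_le _ _ le_rfl, append_vtx_add u (single hbc) 1]
      simpa [single, u.last] using hbc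

theorem IsDirected.anc_vtx {u : GWalk E a b} (hu : u.IsDirected) {k : ℕ} (hk : k ≤ u.len) :
    Anc E a (u.vtx k) := by
  have := anc_of_chain (Nat.zero_le k) fun j _ hj => hu j (by omega)
  rwa [u.first] at this

theorem setOf_isColliderAt_finite (w : GWalk E a b) : {k | w.IsColliderAt k}.Finite :=
  (Set.finite_Iio w.len).subset fun _ hk => hk.2.1

theorem numColliders_lt_of_mapsTo {a' b' : V} {w : GWalk E a b} {w' : GWalk E a' b'} {i : ℕ}
    (hi : w.IsColliderAt i) (f : ℕ → ℕ)
    (hf : ∀ k, w'.IsColliderAt k → w.IsColliderAt (f k) ∧ f k ≠ i)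
    (hinj : Set.InjOn f {k | w'.IsColliderAt k}) : w'.numColliders < w.numColliders :=
  calc w'.numColliders ≤ ({k | w.IsColliderAt k} \ {i}).ncard :=
        Set.ncard_le_ncard_of_injOn f (fun k hk => hf k hk) hinj
          (w.setOf_isColliderAt_finite.subset Set.sdiff_subset)
    _ < w.numColliders := Set.ncard_sdiff_singleton_lt_of_mem hi w.setOf_isColliderAt_finite

theorem isColliderAt_take_append {i k : ℕ} {w : GWalk E a b} (hi : i ≤ w.len) (hv : w.vtx i = v)
    (w₂ : GWalk E v c) (hk : k < i) :
    ((w.take i hi hv).append w₂).IsColliderAt k ↔ w.IsColliderAt k :=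
  (isColliderAt_append_of_lt _ _ hk).trans (isColliderAt_take w hi hv hk)

theorem isColliderAt_append_drop {j k : ℕ} {w : GWalk E b c} (w₁ : GWalk E a v) (hj : j ≤ w.len)
    (hv : w.vtx j = v) (hk : 0 < k) :
    (w₁.append (w.drop j hj hv)).IsColliderAt (w₁.len + k) ↔ w.IsColliderAt (j + k) :=
  (isColliderAt_append_add _ _ hk).trans (isColliderAt_drop w hj hv hk)

theorem IsBackdoor.take_append {w : GWalk E a b} (hw : w.IsBackdoor) {i : ℕ} (hi0 : 0 < i)
    (hi : i ≤ w.len) (w₂ : GWalk E (w.vtx i) c) (h₂ : ∀ k ≤ w₂.len, w₂.vtx k ≠ a) :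
    ((w.take i hi rfl).append w₂).IsBackdoor := by
  refine ⟨Nat.add_pos_left hi0 _, ?_, fun k hk0 hk => ?_⟩
  · rw [take_append_vtx_of_le _ _ _ _ hi0, take_append_vtx_of_le _ _ _ _ (Nat.zero_le _)]
    exact hw.2.1
  by_cases hki : k ≤ i
  · rw [take_append_vtx_of_le _ _ _ _ hki]
    exact hw.2.2 k hk0 (by omega)
  obtain ⟨k, rfl⟩ := Nat.exists_eq_add_of_le (le_of_not_ge hki)
  rw [take_append_vtx_add]
  exact h₂ k (by simp at hk; omega)

def shortcut (w : GWalk E a b) {i j : ℕ} (hij : i ≤ j) (hj : j ≤ w.len)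
    (heq : w.vtx i = w.vtx j) : GWalk E a b :=
  (w.take i (hij.trans hj) rfl).append (w.drop j hj heq.symm)

section Shortcut

variable {w : GWalk E a b} {i j : ℕ} (hij : i ≤ j) (hj : j ≤ w.len) (heq : w.vtx i = w.vtx j)

theorem shortcut_len : (w.shortcut hij hj heq).len = i + (w.len - j) := rfl

theorem shortcut_vtx_of_le {k : ℕ} (hk : k ≤ i) : (w.shortcut hij hj heq).vtx k = w.vtx k :=
  append_vtx_of_le _ _ hk

theorem shortcut_vtx_add (k : ℕ) : (w.shortcut hij hj heq).vtx (i + k) = w.vtx (j + k) :=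
  append_vtx_add _ _ k

theorem isColliderAt_shortcut_of_lt {k : ℕ} (hk : k < i) :
    (w.shortcut hij hj heq).IsColliderAt k ↔ w.IsColliderAt k :=
  isColliderAt_take_append _ rfl _ hk

theorem isColliderAt_shortcut_add {k : ℕ} (hk : 0 < k) :
    (w.shortcut hij hj heq).IsColliderAt (i + k) ↔ w.IsColliderAt (j + k) :=
  isColliderAt_append_drop _ hj _ hk

theorem isColliderAt_shortcut_self (hi0 : 0 < i) (hjlt : j < w.len) :
    (w.shortcut hij hj heq).IsColliderAt i ↔
      E (w.vtx (i - 1)) (w.vtx i) ∧ E (w.vtx (j + 1)) (w.vtx j) := by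
  simp only [IsColliderAt, shortcut_vtx_of_le hij hj heq (Nat.sub_le i 1),
    shortcut_vtx_of_le hij hj heq le_rfl, shortcut_vtx_add hij hj heq 1, ← heq, shortcut_len]
  exact ⟨fun h => h.2.2, fun h => ⟨hi0, by omega, h⟩⟩

theorem IsBackdoor.shortcut (hw : w.IsBackdoor) (hlt : i < j) :
    (w.shortcut hij hj heq).IsBackdoor :=
  hw.take_append (Nat.pos_of_ne_zero fun h => hw.2.2 j (by omega) hj (by rw [← heq, h, w.first]))
    _ _ fun k hk => hw.2.2 (j + k) (by omega) (by simp [drop] at hk; omega)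

end Shortcut

section Acyclic

variable [Std.Irrefl (TransGen E)] {x y : V} {S A : Set V}

theorem IsDirected.vtx_ne_last {u : GWalk E a b} (hu : u.IsDirected) {k : ℕ} (hk : k < u.len) :
    u.vtx k ≠ b := by
  intro h
  have := transGen_of_chain hk fun j _ hj => hu j hj
  rw [h, u.last] at this
  exact irrefl b this

theorem not_isColliderAt_of_forward (w : GWalk E a b) {k : ℕ}
    (h : E (w.vtx k) (w.vtx (k + 1))) : ¬ w.IsColliderAt k :=
  fun hc => not_rel_of_rel h hc.2.2.2

theorem not_isColliderAt_of_backward (w : GWalk E a b) {k : ℕ}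
    (h : E (w.vtx k) (w.vtx (k - 1))) : ¬ w.IsColliderAt k :=
  fun hc => not_rel_of_rel hc.2.2.1 h

theorem IsDirected.isColliderAt_of_take_append {w : GWalk E a b} {i : ℕ} (hi : i ≤ w.len)
    {u : GWalk E (w.vtx i) c} (hu : u.IsDirected) {k : ℕ}
    (hk : ((w.take i hi rfl).append u).IsColliderAt k) : k < i ∧ w.IsColliderAt k := by
  by_cases hki : k < i
  · exact ⟨hki, (isColliderAt_take_append hi rfl u hki).1 hk⟩
  obtain ⟨k, rfl⟩ := Nat.exists_eq_add_of_le (not_lt.1 hki)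
  refine absurd hk (not_isColliderAt_of_forward _ ?_)
  rw [Nat.add_assoc, take_append_vtx_add, take_append_vtx_add]
  exact hu k (by have := hk.2.1; simp at this; omega)

theorem IsDirected.isColliderAt_of_reverse_append {w : GWalk E a b} {i : ℕ} (hi : i ≤ w.len)
    {u : GWalk E (w.vtx i) c} (hu : u.IsDirected) {k : ℕ}
    (hk : (u.reverse.append (w.drop i hi rfl)).IsColliderAt k) :
    u.len < k ∧ w.IsColliderAt (i + (k - u.len)) := by
  by_cases hkm : k ≤ u.len
  · refine absurd hk (not_isColliderAt_of_backward _ ?_)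
    have := hk.1
    rw [reverse_append_vtx_of_le _ _ hkm, reverse_append_vtx_of_le _ _ (by omega),
      show u.len - (k - 1) = u.len - k + 1 by omega]
    exact hu (u.len - k) (by omega)
  obtain ⟨k, rfl⟩ := Nat.exists_eq_add_of_le (le_of_not_ge hkm)
  refine ⟨by omega, ?_⟩
  rw [Nat.add_sub_cancel_left]
  exact (isColliderAt_append_drop u.reverse hi rfl (by omega)).1 hk

theorem IsDirected.isBackdoor_reverse_append {u : GWalk E c a} (hu : u.IsDirected)
    (w₂ : GWalk E c b) (h₂ : ∀ k ≤ w₂.len, w₂.vtx k ≠ a) : (u.reverse.append w₂).IsBackdoor := by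
  have hm : 0 < u.len := by
    refine Nat.pos_of_ne_zero fun h => h₂ 0 (Nat.zero_le _) ?_
    calc w₂.vtx 0 = u.vtx 0 := w₂.first.trans u.first.symm
      _ = u.vtx u.len := by rw [h]
      _ = a := u.last
  refine ⟨by simp; omega, ?_, fun k hk0 hk => ?_⟩
  · rw [reverse_append_vtx_of_le _ _ hm, reverse_append_vtx_of_le _ _ (Nat.zero_le _)]
    simpa [Nat.sub_add_cancel hm, u.last] using hu (u.len - 1) (by omega)
  by_cases hkm : k ≤ u.len
  · rw [reverse_append_vtx_of_le _ _ hkm]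
    exact hu.vtx_ne_last (by omega)
  obtain ⟨k, rfl⟩ := Nat.exists_eq_add_of_le (le_of_not_ge hkm)
  rw [reverse_append_vtx_add]
  exact h₂ k (by simp at hk; omega)

theorem exists_reroute_to_target (w : GWalk E x y) (hw : w.IsBackdoor) (ha : w.ActiveGiven S A)
    {i : ℕ} (hi : w.IsColliderAt i) (hS : ∀ v, Anc E (w.vtx i) v → v ∉ S)
    (hx : ¬ Anc E (w.vtx i) x) (hy : Anc E (w.vtx i) y) :
    ∃ w' : GWalk E x y, w'.IsBackdoor ∧ w'.ActiveGiven S A ∧ w'.numColliders < w.numColliders := by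
  obtain ⟨u, hu⟩ := exists_isDirected_of_anc hy
  have hil : i ≤ w.len := hi.2.1.le
  have hcoll := fun k => hu.isColliderAt_of_take_append (k := k) hil
  refine ⟨(w.take i hil rfl).append u,
    hw.take_append hi.1 hil u fun k hk h => hx (by simpa [h] using hu.anc_vtx hk),
    ⟨fun k hk0 hk hnc => ?_,
    fun k hk => ?_⟩, numColliders_lt_of_mapsTo hi id
    (fun k hk => ⟨(hcoll k hk).2, (hcoll k hk).1.ne⟩) (Set.injOn_id _)⟩
  · by_cases hki : k < i
    · rw [take_append_vtx_of_le _ _ _ _ hki.le]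
      exact ha.1 k hk0 (by omega) fun hc => hnc ((isColliderAt_take_append hil rfl u hki).2 hc)
    obtain ⟨k, rfl⟩ := Nat.exists_eq_add_of_le (not_lt.1 hki)
    rw [take_append_vtx_add]
    exact hS _ (hu.anc_vtx (by simp at hk; omega))
  · obtain ⟨hki, hwk⟩ := hcoll k hk
    rw [take_append_vtx_of_le _ _ _ _ hki.le]
    exact ha.2 k hwk

theorem exists_reroute_from_source (w : GWalk E x y) (hw : w.IsBackdoor)
    (ha : w.ActiveGiven S A) {i : ℕ} (hi : w.IsColliderAt i)
    (hS : ∀ v, Anc E (w.vtx i) v → v ∉ S) (hx : Anc E (w.vtx i) x) :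
    ∃ w' : GWalk E x y, w'.IsBackdoor ∧ w'.ActiveGiven S A ∧ w'.numColliders < w.numColliders := by
  obtain ⟨u, hu⟩ := exists_isDirected_of_anc hx
  have hil : i ≤ w.len := hi.2.1.le
  have hcoll := fun k => hu.isColliderAt_of_reverse_append (k := k) hil
  refine ⟨u.reverse.append (w.drop i hil rfl),
    hu.isBackdoor_reverse_append _ fun k hk => hw.2.2 (i + k) (by have := hi.1; omega)
      (by simp at hk; omega),
    ⟨fun k hk0 hk hnc => ?_, fun k hk => ?_⟩,
    numColliders_lt_of_mapsTo hi (fun k => i + (k - u.len))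
      (fun k hk => ⟨(hcoll k hk).2, by have := (hcoll k hk).1; omega⟩) fun k₁ hk₁ k₂ hk₂ h => ?_⟩
  · by_cases hkm : k ≤ u.len
    · rw [reverse_append_vtx_of_le _ _ hkm]
      exact hS _ (hu.anc_vtx (by omega))
    obtain ⟨k, rfl⟩ := Nat.exists_eq_add_of_le (le_of_not_ge hkm)
    rw [reverse_append_vtx_add, drop_vtx]
    refine ha.1 (i + k) (by omega) (by simp at hk; omega) fun hc => hnc ?_
    exact (isColliderAt_append_drop u.reverse hil rfl (by omega)).2 hc
  · obtain ⟨hmk, hwk⟩ := hcoll k hk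
    obtain ⟨k, rfl⟩ := Nat.exists_eq_add_of_le hmk.le
    rw [reverse_append_vtx_add, drop_vtx]
    simpa using ha.2 _ hwk
  · have := (hcoll k₁ hk₁).1
    have := (hcoll k₂ hk₂).1
    simp only at h
    omega

theorem exists_openGiven_of_activeGiven (w : GWalk E x y) (hw : w.IsBackdoor)
    (ha : w.ActiveGiven S (S ∪ {x, y})) : ∃ w' : GWalk E x y, w'.IsBackdoor ∧ w'.ActiveGiven S S := by
  induction hn : w.numColliders using Nat.strong_induction_on generalizing w with
  | _ n ih =>
  by_cases hopen : ∀ i, w.IsColliderAt i → ∃ d ∈ S, Anc E (w.vtx i) d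
  · exact ⟨w, hw, ha.1, hopen⟩
  push Not at hopen
  obtain ⟨i, hi, hnS⟩ := hopen
  have hS : ∀ v, Anc E (w.vtx i) v → v ∉ S := fun v hv hvS => hnS v hvS hv
  obtain ⟨w', hw', ha', hlt⟩ : ∃ w' : GWalk E x y, w'.IsBackdoor ∧
      w'.ActiveGiven S (S ∪ {x, y}) ∧ w'.numColliders < w.numColliders := by
    by_cases hx : Anc E (w.vtx i) x
    · exact w.exists_reroute_from_source hw ha hi hS hx
    refine w.exists_reroute_to_target hw ha hi hS hx ?_
    obtain ⟨d, hd, hanc⟩ := ha.2 i hi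
    rcases hd with hd | rfl | rfl
    · exact absurd hd (hS d hanc)
    · exact absurd hanc hx
    · exact hanc
  exact ih _ (hn ▸ hlt) w' hw' ha' rfl

/-- From `w.vtx i` the walk `w` goes forward, and it must turn back before its edge into
`w.vtx j`. -/
theorem exists_collider_anc_of_isColliderAt_shortcut {w : GWalk E a b} {i j : ℕ} (hij : i ≤ j)
    (hj : j ≤ w.len) (heq : w.vtx i = w.vtx j) (hc : (w.shortcut hij hj heq).IsColliderAt i) :
    ∃ l, w.IsColliderAt l ∧ Anc E (w.vtx i) (w.vtx l) := by
  have hjlt : j < w.len := by have := hc.2.1; rw [shortcut_len] at this; omega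
  obtain ⟨hL, hR⟩ := (isColliderAt_shortcut_self hij hj heq hc.1 hjlt).1 hc
  by_cases hb : E (w.vtx (i + 1)) (w.vtx i)
  · exact ⟨i, ⟨hc.1, by omega, hL, hb⟩, .refl⟩
  have hf := (w.adj i (by omega)).resolve_right hb
  refine (w.exists_collider_or_forall_forward (by omega) hf).resolve_right fun hall => ?_
  exact not_rel_of_rel (hall j hij hjlt) hR

theorem ActiveGiven.shortcut {w : GWalk E a b} (ho : w.ActiveGiven S S) {i j : ℕ} (hij : i ≤ j)
    (hj : j ≤ w.len) (heq : w.vtx i = w.vtx j) : (w.shortcut hij hj heq).ActiveGiven S S := by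
  refine ⟨fun k hk0 hk hnc => ?_, fun k hk => ?_⟩
  · rw [shortcut_len] at hk
    rcases lt_trichotomy k i with hki | rfl | hki
    · rw [shortcut_vtx_of_le _ _ _ hki.le]
      exact ho.1 k hk0 (by omega) fun hc => hnc ((isColliderAt_shortcut_of_lt _ _ _ hki).2 hc)
    · rw [shortcut_vtx_of_le _ _ _ le_rfl]
      by_cases hL : E (w.vtx (k - 1)) (w.vtx k)
      · have hR : ¬ E (w.vtx (j + 1)) (w.vtx j) := fun hR =>
          hnc ((isColliderAt_shortcut_self _ _ _ hk0 (by omega)).2 ⟨hL, hR⟩)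
        rw [heq]
        exact ho.1 j (by omega) (by omega) fun hc => hR hc.2.2.2
      · exact ho.1 k hk0 (by omega) fun hc => hL hc.2.2.1
    · obtain ⟨k, rfl⟩ := Nat.exists_eq_add_of_le hki.le
      rw [shortcut_vtx_add]
      exact ho.1 _ (by omega) (by omega) fun hc =>
        hnc ((isColliderAt_shortcut_add _ _ _ (by omega)).2 hc)
  · rcases lt_trichotomy k i with hki | rfl | hki
    · rw [shortcut_vtx_of_le _ _ _ hki.le]
      exact ho.2 k ((isColliderAt_shortcut_of_lt _ _ _ hki).1 hk)
    · obtain ⟨l, hl, hanc⟩ := exists_collider_anc_of_isColliderAt_shortcut hij hj heq hk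
      obtain ⟨d, hd, hanc'⟩ := ho.2 l hl
      rw [shortcut_vtx_of_le _ _ _ le_rfl]
      exact ⟨d, hd, hanc.trans hanc'⟩
    · obtain ⟨k, rfl⟩ := Nat.exists_eq_add_of_le hki.le
      rw [shortcut_vtx_add]
      exact ho.2 _ ((isColliderAt_shortcut_add _ _ _ (by omega)).1 hk)

theorem exists_path_of_openGiven (w : GWalk E x y) (hw : w.IsBackdoor) (ho : w.ActiveGiven S S) :
    ∃ p : GPath E x y, p.IsBackdoor ∧ p.OpenGiven S := by
  induction hn : w.len using Nat.strong_induction_on generalizing w with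
  | _ n ih =>
  by_cases hinj : ∀ i j, i ≤ w.len → j ≤ w.len → w.vtx i = w.vtx j → i = j
  · exact ⟨w.toPath hw.1 hinj, hw.2.1, ho⟩
  push Not at hinj
  obtain ⟨i, j, hi, hj, heq, hne⟩ := hinj
  wlog hij : i < j generalizing i j
  · exact this j i hj hi heq.symm hne.symm (by omega)
  exact ih _ (by rw [← hn, shortcut_len]; omega) _ (hw.shortcut hij.le hj heq hij)
    (ho.shortcut hij.le hj heq) rfl

theorem exists_path_of_activeGiven (w : GWalk E x y) (hw : w.IsBackdoor)
    (ha : w.ActiveGiven S (S ∪ {x, y})) : ∃ p : GPath E x y, p.IsBackdoor ∧ p.OpenGiven S :=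
  let ⟨w', hw', ho'⟩ := w.exists_openGiven_of_activeGiven hw ha
  w'.exists_path_of_openGiven hw' ho'

end Acyclic

end GWalk

namespace GPath

variable {E : V → V → Prop} {a b : V}

theorem properFrom_singleton (p : GPath E a b) : p.ProperFrom {a} := by
  intro i hi hil h
  have := p.inj i 0 hil (Nat.zero_le _) (h.trans p.first.symm)
  omega

theorem isBackdoor_toWalk {p : GPath E a b} (hp : p.IsBackdoor) : p.toWalk.IsBackdoor := by
  refine ⟨p.len_pos, hp, fun i hi hil h => ?_⟩
  have := p.inj i 0 hil (Nat.zero_le _) (h.trans p.first.symm)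
  omega

theorem not_causal_of_isBackdoor [Std.Irrefl (TransGen E)] {p : GPath E a b} (hp : p.IsBackdoor) :
    ¬ p.Causal :=
  fun hc => not_rel_of_rel (hc 0 p.len_pos) hp

theorem isBackdoor_of_openGiven {S : Set V} {p : GPath E a b} (hnc : ¬ p.Causal)
    (ho : p.OpenGiven S) (hS : ∀ s ∈ S, ¬ Anc E a s) : p.IsBackdoor := by
  refine (p.adj 0 p.len_pos).resolve_left fun hf => ?_
  rcases p.toWalk.exists_collider_or_forall_forward p.len_pos hf with ⟨l, hl, hanc⟩ | hall
  · obtain ⟨d, hd, hanc'⟩ := ho.2 l hl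
    exact hS d hd (p.first ▸ hanc.trans hanc')
  · exact hnc fun k hk => hall k (Nat.zero_le k) hk

theorem exists_noncollider_eq_of_openGiven_sdiff {Z : Set V} {z : V} {p : GPath E a b}
    (ho : p.OpenGiven (Z \ {z})) (hZ : ¬ p.OpenGiven Z) :
    ∃ i ≤ p.len, ¬ p.IsColliderAt i ∧ p.vtx i = z := by
  by_contra! h
  refine hZ ⟨fun i hi0 hi hnc hiZ => ho.1 i hi0 hi hnc ⟨hiZ, h i hi.le hnc⟩, fun i hi => ?_⟩
  obtain ⟨d, hd, hanc⟩ := ho.2 i hi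
  exact ⟨d, hd.1, hanc⟩

end GPath

section Adjustment

variable {E : V → V → Prop} {X Y : V} {Z : Set V}

theorem exists_openGiven_of_not_adjustmentCriterion (hZ : AdjustmentCriterion E {X} {Y} Z)
    {Z' : Set V} (hZ' : Z' ⊆ Z) (hn : ¬ AdjustmentCriterion E {X} {Y} Z') :
    ∃ p : GPath E X Y, ¬ p.Causal ∧ p.OpenGiven Z' := by
  by_contra! h
  refine hn ⟨fun w hw hp z hz => hZ.1 w hw hp z (hZ' hz), fun x hx y hy => ?_⟩
  obtain rfl := Set.mem_singleton_iff.1 hx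
  obtain rfl := Set.mem_singleton_iff.1 hy
  exact fun p _ => h p

theorem anc_or_anc_of_forall_exists_openGiven_sdiff [Finite V] [Std.Irrefl (TransGen E)]
    (h : ∀ z ∈ Z, ∃ p : GPath E X Y, p.OpenGiven (Z \ {z}) ∧ ¬ p.OpenGiven Z) :
    ∀ z ∈ Z, Anc E z X ∨ Anc E z Y := by
  have : IsTrans V (flip (TransGen E)) := ⟨fun _ _ _ h₁ h₂ => h₂.trans h₁⟩
  have : Std.Irrefl (flip (TransGen E)) := ⟨fun a => irrefl (r := TransGen E) a⟩
  intro z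
  induction z using (Finite.wellFounded_of_trans_of_irrefl (flip (TransGen E))).induction with
  | _ z ih =>
  intro hz
  obtain ⟨p, ho, hnZ⟩ := h z hz
  obtain ⟨i, hi, hnc, rfl⟩ := p.exists_noncollider_eq_of_openGiven_sdiff ho hnZ
  rcases p.toWalk.anc_ends_or_collider_of_not_isColliderAt hi hnc with hX | hY | ⟨l, hl, hanc⟩
  · exact .inl hX
  · exact .inr hY
  obtain ⟨d, ⟨hdZ, hdz⟩, hanc'⟩ := ho.2 l hl
  have hzd : Anc E (p.vtx i) d := hanc.trans hanc'
  have htd : TransGen E (p.vtx i) d :=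
    (reflTransGen_iff_eq_or_transGen.1 hzd).resolve_left hdz
  exact (ih d htd hdZ).imp hzd.trans hzd.trans

end Adjustment

theorem stmt_13_general [Fintype V] (E : V → V → Prop)
    (hdag : Irreflexive (Relation.TransGen E))
    (X Y : V)
    (Z : Set V)
    (hadj : AdjustmentCriterion E {X} {Y} Z)
    (hanc : ∀ z ∈ Z, ¬ Anc E X z) :
    (∀ z ∈ Z, ¬ AdjustmentCriterion E {X} {Y} (Z \ {z})) ↔
      (∀ Z', Z' ⊂ Z → ¬ AdjustmentCriterion E {X} {Y} Z') := by
  have : Std.Irrefl (TransGen E) := ⟨hdag⟩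
  refine ⟨fun hmin Z' hZ' hZ'adj => ?_, fun h z hz => h _ (Set.sdiff_singleton_ssubset.2 hz)⟩
  have hopen : ∀ z ∈ Z, ∃ p : GPath E X Y, ¬ p.Causal ∧ p.OpenGiven (Z \ {z}) := fun z hz =>
    exists_openGiven_of_not_adjustmentCriterion hadj Set.sdiff_subset (hmin z hz)
  have hZanc : ∀ z ∈ Z, Anc E z X ∨ Anc E z Y :=
    anc_or_anc_of_forall_exists_openGiven_sdiff fun z hz =>
      let ⟨p, hnc, ho⟩ := hopen z hz
      ⟨p, ho, hadj.2 X rfl Y rfl p p.properFrom_singleton hnc⟩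
  obtain ⟨z, hz, hzZ'⟩ := Set.exists_of_ssubset hZ'
  obtain ⟨p, hnc, ho⟩ := hopen z hz
  have hback : p.IsBackdoor := GPath.isBackdoor_of_openGiven hnc ho fun s hs => hanc s hs.1
  have hactive : p.toWalk.ActiveGiven Z' (Z' ∪ {X, Y}) :=
    GWalk.ActiveGiven.mono (S := Z \ {z}) ho (fun v hv => ⟨hZ'.1 hv, fun h => hzZ' (h ▸ hv)⟩)
      fun d hd => (hZanc d hd.1).elim (⟨X, by simp, ·⟩) (⟨Y, by simp, ·⟩)
  obtain ⟨q, hq, hqo⟩ := p.toWalk.exists_path_of_activeGiven (GPath.isBackdoor_toWalk hback) hactive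
  exact hZ'adj.2 X rfl Y rfl q q.properFrom_singleton (GPath.not_causal_of_isBackdoor hq) hqo

/-- **Equivalence of elementwise minimality and minimality.** If `Z` satisfies the
adjustment criterion relative to `({X}, {Y})` and `X` is not an ancestor of any vertex
of `Z`, then `Z` is elementwise minimal iff no proper subset of `Z` satisfies the
adjustment criterion relative to `({X}, {Y})`. -/
theorem stmt_13 [Fintype V] (E : V → V → Prop)
    (hdag : Irreflexive (Relation.TransGen E))
    (X Y : V) (hXY : X ≠ Y)
    (Z : Set V) (hZsub : Z ⊆ ({X, Y} : Set V)ᶜ)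
    (hadj : AdjustmentCriterion E {X} {Y} Z)
    (hanc : ∀ z ∈ Z, ¬ Anc E X z) :
    (∀ z ∈ Z, ¬ AdjustmentCriterion E {X} {Y} (Z \ {z})) ↔
      (∀ Z', Z' ⊂ Z → ¬ AdjustmentCriterion E {X} {Y} Z') :=
  stmt_13_general E hdag X Y Z hadj hanc
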